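/- Restriction of flows: if f' is a flow with pre(f') = c', and c ≤ c' componentwise, then there exists a flow f ≤ f' (componentwise) with pre(f) = c and post(f) ≤ post(f'). Consequently, if a downward closed set of flows 𝓕 allows c' to go to d', then for every c ≤ c' there exists d ≤ d' such that c goes to d using flows from 𝓕. -/

import Mathlib

section
variable {Q : Type*} [Fintype Q]

def preFlow (f : Q × Q → ℕ) : Q → ℕ := fun p => ∑ q, f (p, q)

def postFlow (f : Q × Q → ℕ) : Q → ℕ := fun q => ∑ p, f (p, q)

inductive GoesTo : List (Q × Q → ℕ) → (Q → ℕ) → (Q → ℕ) → Prop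
  | nil (c : Q → ℕ) : GoesTo [] c c
  | cons {f : Q × Q → ℕ} {fs : List (Q × Q → ℕ)} {c c₁ c' : Q → ℕ} :
      c = preFlow f → c₁ = postFlow f → GoesTo fs c₁ c' → GoesTo (f :: fs) c c'

private lemma exists_le_sum {α : Type*} [DecidableEq α] (s : Finset α) :
    ∀ (g : α → ℕ) (n : ℕ), n ≤ ∑ q ∈ s, g q →
      ∃ f : α → ℕ, f ≤ g ∧ ∑ q ∈ s, f q = n := by
  induction s using Finset.induction with
  | empty =>
    intro g n hn
    simp at hn
    exact ⟨0, fun q => Nat.zero_le _, by simp [hn]⟩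
  | @insert a s ha ih =>
    intro g n hn
    rw [Finset.sum_insert ha] at hn
    have h1 : n - min n (g a) ≤ ∑ q ∈ s, g q := by omega
    obtain ⟨f, hf, hsum⟩ := ih g (n - min n (g a)) h1
    refine ⟨fun q => if q = a then min n (g a) else f q, ?_, ?_⟩
    · intro q
      by_cases hq : q = a
      · subst hq; simp
      · simpa [hq] using hf q
    · rw [Finset.sum_insert ha, if_pos rfl,
        Finset.sum_congr rfl (fun q hq => if_neg (fun h : q = a => ha (h ▸ hq))), hsum]
      omega

private lemma restrict_flow (f' : Q × Q → ℕ) (c' c : Q → ℕ) (hpre : preFlow f' = c')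
    (hc : c ≤ c') :
    ∃ f : Q × Q → ℕ, f ≤ f' ∧ preFlow f = c ∧ postFlow f ≤ postFlow f' := by
  classical
  have H : ∀ p : Q, ∃ h : Q → ℕ, h ≤ (fun q => f' (p, q)) ∧ ∑ q, h q = c p := by
    intro p
    apply exists_le_sum
    have : preFlow f' p = c' p := by rw [hpre]
    calc c p ≤ c' p := hc p
      _ = ∑ q, f' (p, q) := this.symm
  choose h hle hsum using H
  refine ⟨fun pq => h pq.1 pq.2, ?_, ?_, ?_⟩
  · intro pq; exact hle pq.1 pq.2
  · funext p; exact hsum p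
  · intro q
    exact Finset.sum_le_sum fun p _ => hle p q

/-- Restriction of flows: a single flow can be restricted to any smaller
pre-configuration, and consequently reachability for a downward closed set of
flows is monotone under decreasing the source configuration. -/
theorem stmt_17 :
    (∀ (f' : Q × Q → ℕ) (c' c : Q → ℕ), preFlow f' = c' → c ≤ c' →
      ∃ f : Q × Q → ℕ, f ≤ f' ∧ preFlow f = c ∧ postFlow f ≤ postFlow f') ∧
    (∀ (𝓕 : Set (Q × Q → ℕ)),
      (∀ f ∈ 𝓕, ∀ g : Q × Q → ℕ, g ≤ f → g ∈ 𝓕) →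
      ∀ (fs : List (Q × Q → ℕ)) (c' d' : Q → ℕ),
        (∀ f ∈ fs, f ∈ 𝓕) → GoesTo fs c' d' →
        ∀ c : Q → ℕ, c ≤ c' →
          ∃ (d : Q → ℕ) (gs : List (Q × Q → ℕ)),
            d ≤ d' ∧ (∀ g ∈ gs, g ∈ 𝓕) ∧ GoesTo gs c d) := by
  refine ⟨restrict_flow, ?_⟩
  intro 𝓕 hdc fs c' d' hmem hgo
  induction hgo with
  | nil c0 =>
    intro c hc
    exact ⟨c, [], hc, by simp, GoesTo.nil c⟩
  | cons hpre hpost htail ih =>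
    intro c hc
    rename_i f fs' cc c₁ dd'
    subst hpre hpost
    obtain ⟨g, hgle, hgpre, hgpost⟩ := restrict_flow f (preFlow f) c rfl hc
    obtain ⟨d, gs, hdd, hgsmem, hgo'⟩ :=
      ih (fun f hf => hmem _ (List.mem_cons_of_mem _ hf)) (postFlow g) hgpost
    refine ⟨d, g :: gs, hdd, ?_, GoesTo.cons hgpre.symm rfl hgo'⟩
    intro x hx
    rcases List.mem_cons.mp hx with h | h
    · exact h ▸ hdc f (hmem f (List.mem_cons_self (a := f) (l := fs'))) g hgle
    · exact hgsmem x h
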